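/- arXiv:0810.4882 — 6 statements merged into one kernel-verified Lean document; each statement's English description precedes it below -/
import Mathlib

section
/- Let n ≥ 1, k ∈ ℤ and ℓ ≥ 0. Define Φ : Z^{ℓ,1}_{n,k} → U(n)^{4ℓ} by Φ(V, c, V', c') = (V, c 𝔯(V') c⁻¹). Then the image of Φ is exactly the representation variety X^{2ℓ}_{n,k} = {W ∈ U(n)^{4ℓ} : 𝔪(W) = e^{−2π√−1 k/n} Iₙ}, where W ∈ U(n)^{4ℓ} is read as (a₁,b₁,…,a_{2ℓ},b_{2ℓ}). -/
/-- `U n` is the group of `n × n` complex unitary matrices. -/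
noncomputable abbrev Un (n : ℕ) := Matrix.unitaryGroup (Fin n) ℂ

/-- For `V = (a₁,b₁,…,a_g,b_g) ∈ U(n)^{2g}`, `mfrak V = ∏ᵢ [aᵢ, bᵢ]`
(ordered product of commutators). -/
noncomputable def mfrak {n g : ℕ} (V : Fin g → Un n × Un n) : Un n :=
  (List.ofFn (fun i => (V i).1 * (V i).2 * (V i).1⁻¹ * (V i).2⁻¹)).prod

/-- The representation variety `X^{g}_{n,k}` of central Yang–Mills connections:
tuples `V ∈ U(n)^{2g}` with `𝔪(V) = e^{-2π√-1 k/n} Iₙ`. -/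
noncomputable def YMset (n g : ℕ) (k : ℤ) : Set (Fin g → Un n × Un n) :=
  {V | (mfrak V : Matrix (Fin n) (Fin n) ℂ)
      = Complex.exp (-(2 * Real.pi * (k : ℝ) / (n : ℝ)) * Complex.I) • 1}

/-- The type-1 symmetric representation variety `Z^{ℓ,1}_{n,k}`: tuples
`(V, c, V', c')` with `𝔪(V) = e^{-π√-1 k/n} c c'` and `𝔪(V') = e^{π√-1 k/n} c' c`. -/
noncomputable def Z1set (n ℓ : ℕ) (k : ℤ) :
    Set ((Fin ℓ → Un n × Un n) × Un n × (Fin ℓ → Un n × Un n) × Un n) :=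
  {z | (mfrak z.1 : Matrix (Fin n) (Fin n) ℂ)
        = Complex.exp (-(Real.pi * (k : ℝ) / (n : ℝ)) * Complex.I) •
            ((z.2.1 * z.2.2.2 : Un n) : Matrix (Fin n) (Fin n) ℂ) ∧
       (mfrak z.2.2.1 : Matrix (Fin n) (Fin n) ℂ)
        = Complex.exp ((Real.pi * (k : ℝ) / (n : ℝ)) * Complex.I) •
            ((z.2.2.2 * z.2.1 : Un n) : Matrix (Fin n) (Fin n) ℂ)}

/-- `Φ(V, c, V', c') = (V, c 𝔯(V') c⁻¹)`, where `𝔯(V') = (b'_ℓ, a'_ℓ, …, b'₁, a'₁)`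
and conjugation by `c` is entrywise; the result is read as an element of `U(n)^{4ℓ}`,
i.e. `2ℓ` pairs `(a₁,b₁,…,a_{2ℓ},b_{2ℓ})`. -/
noncomputable def Phi1 {n ℓ : ℕ}
    (z : (Fin ℓ → Un n × Un n) × Un n × (Fin ℓ → Un n × Un n) × Un n) :
    Fin (2 * ℓ) → Un n × Un n := fun j =>
  if h : (j : ℕ) < ℓ then z.1 ⟨j, h⟩
  else
    (z.2.1 * (z.2.2.1 ⟨2 * ℓ - 1 - (j : ℕ), by have := j.isLt; omega⟩).2 * z.2.1⁻¹,
     z.2.1 * (z.2.2.1 ⟨2 * ℓ - 1 - (j : ℕ), by have := j.isLt; omega⟩).1 * z.2.1⁻¹)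
section auxlists
variable {α : Type*} {G : Type*} [Group G]

private lemma ofFn_rev' {m : ℕ} (g : Fin m → α) :
    List.ofFn (fun i => g i.rev) = (List.ofFn g).reverse := by
  apply List.ext_getElem
  · simp
  · intro i h1 h2
    simp only [List.getElem_ofFn, List.getElem_reverse, List.length_ofFn] at *
    congr 1
    ext
    simp [Fin.rev]
    omega

private lemma ofFn_two_mul {ℓ : ℕ} (f : Fin (2 * ℓ) → α) :
    List.ofFn f = (List.ofFn fun i : Fin ℓ => f ⟨i, by omega⟩)
        ++ (List.ofFn fun i : Fin ℓ => f ⟨ℓ + i, by omega⟩) := by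
  apply List.ext_getElem
  · simp; omega
  · intro i h1 h2
    rcases lt_or_ge i ℓ with h | h
    · rw [List.getElem_append_left (by simpa)]
      simp
    · rw [List.getElem_append_right (by simpa)]
      simp only [List.getElem_ofFn, List.length_ofFn]
      congr 1
      ext
      simp
      omega

private lemma prod_map_conj (c : G) (l : List G) :
    (l.map fun x => c * x * c⁻¹).prod = c * l.prod * c⁻¹ := by
  induction l with
  | nil => simp
  | cons a t ih => simp only [List.map_cons, List.prod_cons, ih]; group

private lemma key_prod {ℓ : ℕ} (c : G) (V' W2 : Fin ℓ → G × G)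
    (hW2 : ∀ i, W2 i = (c * (V' i.rev).2 * c⁻¹, c * (V' i.rev).1 * c⁻¹)) :
    (List.ofFn fun i => (W2 i).1 * (W2 i).2 * (W2 i).1⁻¹ * (W2 i).2⁻¹).prod
      = c * ((List.ofFn fun i => (V' i).1 * (V' i).2 * (V' i).1⁻¹ * (V' i).2⁻¹).prod)⁻¹ * c⁻¹ := by
  have e1 : (fun i => (W2 i).1 * (W2 i).2 * (W2 i).1⁻¹ * (W2 i).2⁻¹)
      = fun i : Fin ℓ =>
          c * ((V' i.rev).1 * (V' i.rev).2 * (V' i.rev).1⁻¹ * (V' i.rev).2⁻¹)⁻¹ * c⁻¹ := by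
    funext i
    rw [hW2 i]
    dsimp only
    group
  rw [e1]
  have e2 : List.ofFn (fun i : Fin ℓ =>
        c * ((V' i.rev).1 * (V' i.rev).2 * (V' i.rev).1⁻¹ * (V' i.rev).2⁻¹)⁻¹ * c⁻¹)
      = (List.ofFn fun i : Fin ℓ =>
          ((V' i.rev).1 * (V' i.rev).2 * (V' i.rev).1⁻¹ * (V' i.rev).2⁻¹)⁻¹).map
          (fun x => c * x * c⁻¹) := by rw [List.map_ofFn]; rfl
  rw [e2, prod_map_conj]
  congr 1
  have e3 : (List.ofFn fun i : Fin ℓ =>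
        ((V' i.rev).1 * (V' i.rev).2 * (V' i.rev).1⁻¹ * (V' i.rev).2⁻¹)⁻¹)
      = (List.ofFn fun i : Fin ℓ =>
          ((V' i).1 * (V' i).2 * (V' i).1⁻¹ * (V' i).2⁻¹)⁻¹).reverse :=
    ofFn_rev' (fun i => ((V' i).1 * (V' i).2 * (V' i).1⁻¹ * (V' i).2⁻¹)⁻¹)
  have e4 : (List.ofFn fun i : Fin ℓ =>
        ((V' i).1 * (V' i).2 * (V' i).1⁻¹ * (V' i).2⁻¹)⁻¹)
      = (List.ofFn fun i : Fin ℓ =>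
          (V' i).1 * (V' i).2 * (V' i).1⁻¹ * (V' i).2⁻¹).map (fun x => x⁻¹) := by
    rw [List.map_ofFn]; rfl
  rw [e3, e4, ← List.prod_inv_reverse]

private lemma key_cancel (s t c c' : G) (ht : ∀ x : G, Commute t x) :
    s * (c * c') * (c * (t * (c' * c))⁻¹ * c⁻¹) = s * t⁻¹ := by
  have h3 : ∀ x : G, t⁻¹ * x = x * t⁻¹ := fun x => ((ht x).inv_left).eq
  simp only [mul_inv_rev, mul_assoc, mul_inv_cancel_left, inv_mul_cancel_left]
  rw [h3]
  simp [← mul_assoc]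

end auxlists

private lemma exp_mem_unitary (n : ℕ) (θ : ℝ) :
    (Complex.exp (θ * Complex.I) • 1 : Matrix (Fin n) (Fin n) ℂ) ∈
      unitary (Matrix (Fin n) (Fin n) ℂ) := by
  have hc : (starRingEnd ℂ) (Complex.exp (θ * Complex.I)) * Complex.exp (θ * Complex.I) = 1 := by
    rw [← Complex.exp_conj, ← Complex.exp_add]
    ring_nf
    simp
  constructor
  · rw [star_smul, star_one, smul_mul_smul_comm, one_mul]
    simp [hc]
  · rw [star_smul, star_one, smul_mul_smul_comm, one_mul]
    rw [mul_comm] at hc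
    simp [hc]

noncomputable def sU (n : ℕ) (θ : ℝ) : Un n :=
  ⟨Complex.exp (θ * Complex.I) • 1, exp_mem_unitary n θ⟩

private lemma coe_sU_mul {n : ℕ} (θ : ℝ) (x : Un n) :
    ((sU n θ * x : Un n) : Matrix (Fin n) (Fin n) ℂ)
      = Complex.exp (θ * Complex.I) • (x : Matrix (Fin n) (Fin n) ℂ) := by
  simp [sU, smul_mul_assoc]

private lemma sU_commute {n : ℕ} (θ : ℝ) (x : Un n) : Commute (sU n θ) x := by
  apply Subtype.ext
  show ((sU n θ * x : Un n) : Matrix (Fin n) (Fin n) ℂ) = ((x * sU n θ : Un n) : _)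
  simp [sU, smul_mul_assoc, mul_smul_comm]

private lemma sU_mul_sU {n : ℕ} (θ φ : ℝ) : sU n θ * sU n φ = sU n (θ + φ) := by
  apply Subtype.ext
  show ((sU n θ * sU n φ : Un n) : Matrix (Fin n) (Fin n) ℂ) = _
  rw [coe_sU_mul]
  simp [sU, ← Complex.exp_add, smul_smul]
  ring_nf

private lemma sU_zero {n : ℕ} : sU n 0 = 1 := by
  apply Subtype.ext
  simp [sU]

private lemma sU_inv {n : ℕ} (θ : ℝ) : (sU n θ)⁻¹ = sU n (-θ) := by
  rw [inv_eq_iff_mul_eq_one, sU_mul_sU]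
  rw [show θ + -θ = 0 by ring, sU_zero]

private lemma coe_eq_smul_iff {n : ℕ} (θ : ℝ) (e : ℂ)
    (he : e = Complex.exp (θ * Complex.I)) (u x : Un n) :
    ((u : Matrix (Fin n) (Fin n) ℂ) = e • (x : Matrix (Fin n) (Fin n) ℂ)) ↔ u = sU n θ * x := by
  rw [he, ← coe_sU_mul]
  exact Subtype.coe_inj

private lemma coe_eq_smul_one_iff {n : ℕ} (θ : ℝ) (e : ℂ)
    (he : e = Complex.exp (θ * Complex.I)) (u : Un n) :
    ((u : Matrix (Fin n) (Fin n) ℂ) = e • (1 : Matrix (Fin n) (Fin n) ℂ)) ↔ u = sU n θ := by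
  have h1 : (1 : Matrix (Fin n) (Fin n) ℂ) = ((1 : Un n) : Matrix (Fin n) (Fin n) ℂ) := rfl
  rw [h1, coe_eq_smul_iff θ e he u 1, mul_one]
private lemma hem1 (n : ℕ) (k : ℤ) :
    Complex.exp (-(Real.pi * (k : ℝ) / (n : ℝ)) * Complex.I)
      = Complex.exp (((-(Real.pi * (k : ℝ) / (n : ℝ)) : ℝ) : ℂ) * Complex.I) := by
  norm_cast

private lemma hem2 (n : ℕ) (k : ℤ) :
    Complex.exp ((Real.pi * (k : ℝ) / (n : ℝ)) * Complex.I)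
      = Complex.exp ((((Real.pi * (k : ℝ) / (n : ℝ)) : ℝ) : ℂ) * Complex.I) := by
  norm_cast

private lemma hem3 (n : ℕ) (k : ℤ) :
    Complex.exp (-(2 * Real.pi * (k : ℝ) / (n : ℝ)) * Complex.I)
      = Complex.exp (((-(Real.pi * (k : ℝ) / (n : ℝ)) + -(Real.pi * (k : ℝ) / (n : ℝ)) : ℝ) : ℂ)
          * Complex.I) := by
  congr 1
  push_cast
  ring

lemma mfrak_phi {n ℓ : ℕ}
    (z : (Fin ℓ → Un n × Un n) × Un n × (Fin ℓ → Un n × Un n) × Un n) :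
    mfrak (Phi1 z) = mfrak z.1 * (z.2.1 * (mfrak z.2.2.1)⁻¹ * z.2.1⁻¹) := by
  obtain ⟨V, c, V', c'⟩ := z
  unfold mfrak
  rw [ofFn_two_mul (f := fun j => (Phi1 (V, c, V', c') j).1 * (Phi1 (V, c, V', c') j).2 *
        (Phi1 (V, c, V', c') j).1⁻¹ * (Phi1 (V, c, V', c') j).2⁻¹), List.prod_append]
  have e1 : (fun i : Fin ℓ => Phi1 (V, c, V', c') ⟨i, by omega⟩) = V := by
    funext i
    simp [Phi1]
  have e2 : ∀ i : Fin ℓ, Phi1 (V, c, V', c') ⟨ℓ + i, by omega⟩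
      = (c * (V' i.rev).2 * c⁻¹, c * (V' i.rev).1 * c⁻¹) := by
    intro i
    have hnot : ¬ ((⟨ℓ + (i : ℕ), by omega⟩ : Fin (2 * ℓ)) : ℕ) < ℓ := by simp
    simp only [Phi1, dif_neg hnot]
    have hidx : (⟨2 * ℓ - 1 - ((⟨ℓ + (i : ℕ), by omega⟩ : Fin (2 * ℓ)) : ℕ),
        by have : (i : ℕ) < ℓ := i.isLt; omega⟩ : Fin ℓ) = i.rev := by
      ext; simp [Fin.rev]; omega
    rw [hidx]
  have := key_prod c V' (fun i => Phi1 (V, c, V', c') ⟨ℓ + i, by omega⟩) e2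
  rw [this]
  have e1' : (List.ofFn fun i : Fin ℓ =>
        (Phi1 (V, c, V', c') ⟨↑i, by omega⟩).1 * (Phi1 (V, c, V', c') ⟨↑i, by omega⟩).2 *
        (Phi1 (V, c, V', c') ⟨↑i, by omega⟩).1⁻¹ * (Phi1 (V, c, V', c') ⟨↑i, by omega⟩).2⁻¹)
      = List.ofFn fun i : Fin ℓ => (V i).1 * (V i).2 * (V i).1⁻¹ * (V i).2⁻¹ := by
    congr 1
    funext i
    rw [show (Phi1 (V, c, V', c') ⟨↑i, by omega⟩) = V i from congrFun e1 i]
  rw [e1']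

/-- the image of `Φ : Z^{ℓ,1}_{n,k} → U(n)^{4ℓ}` is exactly the
representation variety `X^{2ℓ}_{n,k}`. -/
theorem stmt3 (n ℓ : ℕ) (hn : 1 ≤ n) (k : ℤ) :
    Phi1 '' Z1set n ℓ k = YMset n (2 * ℓ) k := by
  ext W
  simp only [Set.mem_image, Z1set, YMset, Set.mem_setOf_eq]
  rw [coe_eq_smul_one_iff _ _ (hem3 n k) (mfrak W)]
  constructor
  · rintro ⟨⟨V, c, V', c'⟩, ⟨h1, h2⟩, rfl⟩
    dsimp only at h1 h2
    rw [coe_eq_smul_iff _ _ (hem1 n k)] at h1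
    rw [coe_eq_smul_iff _ _ (hem2 n k)] at h2
    rw [mfrak_phi]
    dsimp only
    rw [h1, h2, key_cancel _ _ _ _ (sU_commute _), sU_inv, sU_mul_sU]
  · intro hW
    set V : Fin ℓ → Un n × Un n := fun i => W ⟨i, by omega⟩ with hV
    set V' : Fin ℓ → Un n × Un n := fun i =>
      ((W ⟨2 * ℓ - 1 - (i : ℕ), by have := i.isLt; omega⟩).2,
       (W ⟨2 * ℓ - 1 - (i : ℕ), by have := i.isLt; omega⟩).1) with hV'
    have hphi : Phi1 (V, (1 : Un n),  V',
        sU n (-(Real.pi * (k : ℝ) / (n : ℝ))) * mfrak V') = W := by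
      funext j
      by_cases hj : (j : ℕ) < ℓ
      · simp [Phi1, dif_pos hj, hV]
      · simp only [Phi1, dif_neg hj, hV', one_mul, inv_one, mul_one]
        have hidx : (⟨2 * ℓ - 1 - (2 * ℓ - 1 - (j : ℕ)),
            by have := j.isLt; omega⟩ : Fin (2 * ℓ)) = j := by
          ext; have := j.isLt; simp; omega
        rw [hidx]
    refine ⟨(V, 1, V', sU n (-(Real.pi * (k : ℝ) / (n : ℝ))) * mfrak V'), ⟨?_, ?_⟩, hphi⟩
    · dsimp only
      rw [coe_eq_smul_iff _ _ (hem1 n k)]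
      have h5 : mfrak W = mfrak V * (mfrak V')⁻¹ := by
        have h := mfrak_phi (V, (1 : Un n), V',
          sU n (-(Real.pi * (k : ℝ) / (n : ℝ))) * mfrak V')
        rw [hphi] at h
        simpa using h
      have h6 : mfrak V = sU n (-(Real.pi * (k : ℝ) / (n : ℝ))
          + -(Real.pi * (k : ℝ) / (n : ℝ))) * mfrak V' := by
        rw [← hW, h5]
        group
      rw [one_mul, ← mul_assoc, sU_mul_sU]
      exact h6
    · dsimp only
      rw [coe_eq_smul_iff _ _ (hem2 n k)]
      rw [mul_one, ← mul_assoc, sU_mul_sU,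
        show Real.pi * (k : ℝ) / (n : ℝ) + -(Real.pi * (k : ℝ) / (n : ℝ)) = 0 by ring,
        sU_zero, one_mul]
end

section
/- Let n ≥ 1, k ∈ ℤ and ℓ ≥ 0. Define Φ : Z^{ℓ,2}_{n,k} → U(n)^{2(2ℓ+1)} by Φ(V, d, c, V', d', c') = (V, d⁻¹ c 𝔯(V') c⁻¹ d, d⁻¹, c c'), where the tuple is read as (a₁,b₁,…,a_{2ℓ+1},b_{2ℓ+1}) with the last pair (a_{2ℓ+1}, b_{2ℓ+1}) = (d⁻¹, c c'). Then the image of Φ is exactly the representation variety X^{2ℓ+1}_{n,k} = {W ∈ U(n)^{2(2ℓ+1)} : 𝔪(W) = e^{−2π√−1 k/n} Iₙ}. -/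
/-- The type-2 symmetric representation variety `Z^{ℓ,2}_{n,k}`: tuples
`(V, d, c, V', d', c')` with `𝔪(V) = e^{-π√-1 k/n} c d' c⁻¹ d` and
`𝔪(V') = e^{π√-1 k/n} c' d (c')⁻¹ d'`. -/
noncomputable def Z2set (n ℓ : ℕ) (k : ℤ) :
    Set ((Fin ℓ → Un n × Un n) × Un n × Un n × (Fin ℓ → Un n × Un n) × Un n × Un n) :=
  {z | (mfrak z.1 : Matrix (Fin n) (Fin n) ℂ)
        = Complex.exp (-(Real.pi * (k : ℝ) / (n : ℝ)) * Complex.I) •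
            ((z.2.2.1 * z.2.2.2.2.1 * z.2.2.1⁻¹ * z.2.1 : Un n) : Matrix (Fin n) (Fin n) ℂ) ∧
       (mfrak z.2.2.2.1 : Matrix (Fin n) (Fin n) ℂ)
        = Complex.exp ((Real.pi * (k : ℝ) / (n : ℝ)) * Complex.I) •
            ((z.2.2.2.2.2 * z.2.1 * z.2.2.2.2.2⁻¹ * z.2.2.2.2.1 : Un n) :
              Matrix (Fin n) (Fin n) ℂ)}

/-- `Φ(V, d, c, V', d', c') = (V, d⁻¹ c 𝔯(V') c⁻¹ d, d⁻¹, c c')`, where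
`𝔯(V') = (b'_ℓ, a'_ℓ, …, b'₁, a'₁)` and conjugation by `d⁻¹ c` is entrywise;
the result is read as `(a₁,b₁,…,a_{2ℓ+1},b_{2ℓ+1})` with the last pair
`(a_{2ℓ+1}, b_{2ℓ+1}) = (d⁻¹, c c')`. -/
noncomputable def Phi2 {n ℓ : ℕ}
    (z : (Fin ℓ → Un n × Un n) × Un n × Un n × (Fin ℓ → Un n × Un n) × Un n × Un n) :
    Fin (2 * ℓ + 1) → Un n × Un n := fun j =>
  if h : (j : ℕ) < ℓ then z.1 ⟨j, h⟩
  else if h2 : (j : ℕ) < 2 * ℓ then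
    ((z.2.1⁻¹ * z.2.2.1) * (z.2.2.2.1 ⟨2 * ℓ - 1 - (j : ℕ), by omega⟩).2 *
        (z.2.1⁻¹ * z.2.2.1)⁻¹,
     (z.2.1⁻¹ * z.2.2.1) * (z.2.2.2.1 ⟨2 * ℓ - 1 - (j : ℕ), by omega⟩).1 *
        (z.2.1⁻¹ * z.2.2.1)⁻¹)
  else (z.2.1⁻¹, z.2.2.1 * z.2.2.2.2.2)


/-!
Write `u = e^{-π√-1 k/n} Iₙ`, a central element, and `g = d⁻¹ c`. Since `𝔯` reverses the
order of the commutators and swaps the entries of each pair, `𝔪(g 𝔯(V') g⁻¹) = g 𝔪(V')⁻¹ g⁻¹`,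
so `𝔪(Φ z) = 𝔪(V) · g 𝔪(V')⁻¹ g⁻¹ · [d⁻¹, c c']`; substituting the two defining relations of
`Z^{ℓ,2}_{n,k}`, everything cancels except `u²`. Conversely, given `W` with `𝔪(W) = u²` and
last pair `(a, b)`, take `d = a⁻¹`, `c = 1`, `c' = b`, `V` the first `ℓ` pairs of `W`,
`V'` the conjugate by `a⁻¹` of the reversal of the middle `ℓ` pairs, and solve the first relation
for `d'`; the second relation is then a rearrangement of `𝔪(W) = u²`. Only the centrality of
`u` is used, so the argument runs in an arbitrary group.
-/

section Blocks

variable {α : Type*} {ℓ : ℕ}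

def concatBlocks (A B : Fin ℓ → α) (p : α) : Fin (2 * ℓ + 1) → α := fun j =>
  if h : (j : ℕ) < ℓ then A ⟨j, h⟩
  else if h' : (j : ℕ) < 2 * ℓ then B ⟨j - ℓ, by omega⟩
  else p

def leftBlock (W : Fin (2 * ℓ + 1) → α) : Fin ℓ → α := fun i => W ⟨i, by omega⟩

def rightBlock (W : Fin (2 * ℓ + 1) → α) : Fin ℓ → α := fun i => W ⟨ℓ + i, by omega⟩

theorem concatBlocks_leftBlock_rightBlock (W : Fin (2 * ℓ + 1) → α) :
    concatBlocks (leftBlock W) (rightBlock W) (W (Fin.last _)) = W := by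
  funext j
  simp only [concatBlocks, leftBlock, rightBlock]
  split_ifs with hleft hright
  · rfl
  · exact congrArg W (Fin.ext (by dsimp only; omega))
  · exact congrArg W (Fin.ext (by simp only [Fin.val_last]; omega))

theorem ofFn_concatBlocks (A B : Fin ℓ → α) (p : α) :
    List.ofFn (concatBlocks A B p) = List.ofFn A ++ List.ofFn B ++ [p] := by
  refine List.ext_getElem (by
    simp only [List.length_ofFn, List.length_append, List.length_singleton]; omega) fun i h _ => ?_
  simp only [List.getElem_ofFn, concatBlocks, List.getElem_append, List.length_append,
    List.length_ofFn] at h ⊢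
  split_ifs <;> first | rfl | omega | simp

theorem ofFn_comp_rev (f : Fin ℓ → α) : (List.ofFn fun i => f i.rev) = (List.ofFn f).reverse := by
  refine List.ext_getElem (by simp) fun i h _ => ?_
  simp only [Fin.rev, List.getElem_ofFn, List.getElem_reverse, List.length_ofFn]
  congr 2
  omega

end Blocks

open scoped commutatorElement

section CommutatorProd

variable {G : Type*} [Group G] {ℓ : ℕ}

def commutatorProd {g : ℕ} (V : Fin g → G × G) : G :=
  (List.ofFn fun i => ⁅(V i).1, (V i).2⁆).prod

theorem commutatorProd_concatBlocks (A B : Fin ℓ → G × G) (p : G × G) :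
    commutatorProd (concatBlocks A B p) = commutatorProd A * commutatorProd B * ⁅p.1, p.2⁆ := by
  have h := congrArg (List.map fun q : G × G => ⁅q.1, q.2⁆) (ofFn_concatBlocks A B p)
  simp only [List.map_ofFn, List.map_append, List.map_cons, List.map_nil] at h
  simp only [commutatorProd, Function.comp_def] at h ⊢
  rw [h, List.prod_append, List.prod_append, List.prod_singleton]

def conjReverse (g : G) (V : Fin ℓ → G × G) : Fin ℓ → G × G :=
  fun i => (g * (V i.rev).2 * g⁻¹, g * (V i.rev).1 * g⁻¹)

theorem conjReverse_inv_conjReverse (g : G) (V : Fin ℓ → G × G) :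
    conjReverse g (conjReverse g⁻¹ V) = V := by
  funext i
  simp [conjReverse, mul_assoc]

theorem commutatorProd_conjReverse (g : G) (V : Fin ℓ → G × G) :
    commutatorProd (conjReverse g V) = g * (commutatorProd V)⁻¹ * g⁻¹ := by
  set c : Fin ℓ → G := fun i => ⁅(V i).1, (V i).2⁆
  have hconj : ∀ i, ⁅(conjReverse g V i).1, (conjReverse g V i).2⁆ = MulAut.conj g (c i.rev)⁻¹ := by
    intro i
    rw [commutatorElement_inv, map_commutatorElement]
    rfl
  calc (List.ofFn fun i => ⁅(conjReverse g V i).1, (conjReverse g V i).2⁆).prod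
      = MulAut.conj g (List.ofFn fun i => (c i.rev)⁻¹).prod := by
        rw [map_list_prod, List.map_ofFn]
        exact congrArg _ (List.ofFn_inj.mpr (funext hconj))
    _ = g * (List.ofFn c).prod⁻¹ * g⁻¹ := by
        rw [ofFn_comp_rev (fun i => (c i)⁻¹), List.prod_inv_reverse, List.map_ofFn]
        rfl

end CommutatorProd

section SymmetricRepresentations

variable {G : Type*} [Group G] {ℓ : ℕ}

/-- `Z^{ℓ,2}_{n,k}` with the central element `u` in place of `e^{-π√-1 k/n} Iₙ`. -/
def symmRepSet (ℓ : ℕ) (u : G) : Set ((Fin ℓ → G × G) × G × G × (Fin ℓ → G × G) × G × G) :=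
  {z | commutatorProd z.1 = u * (z.2.2.1 * z.2.2.2.2.1 * z.2.2.1⁻¹ * z.2.1) ∧
       commutatorProd z.2.2.2.1 = u⁻¹ * (z.2.2.2.2.2 * z.2.1 * z.2.2.2.2.2⁻¹ * z.2.2.2.2.1)}

/-- The map `Φ`, over an arbitrary group. -/
def symmGlue (z : (Fin ℓ → G × G) × G × G × (Fin ℓ → G × G) × G × G) : Fin (2 * ℓ + 1) → G × G :=
  concatBlocks z.1 (conjReverse (z.2.1⁻¹ * z.2.2.1) z.2.2.2.1) (z.2.1⁻¹, z.2.2.1 * z.2.2.2.2.2)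

variable {u : G}

theorem commutatorProd_symmGlue (hu : u ∈ Subgroup.center G) {z} (hz : z ∈ symmRepSet ℓ u) :
    commutatorProd (symmGlue z) = u * u := by
  obtain ⟨V, d, c, V', d', c'⟩ := z
  obtain ⟨hV, hV'⟩ := hz
  have hcomm : ∀ x, x * u = u * x := fun x => Subgroup.mem_center_iff.mp hu x
  rw [symmGlue, commutatorProd_concatBlocks, commutatorProd_conjReverse, hV, hV',
    commutatorElement_def]
  calc u * (c * d' * c⁻¹ * d) * (d⁻¹ * c * (u⁻¹ * (c' * d * c'⁻¹ * d'))⁻¹ * (d⁻¹ * c)⁻¹) *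
        (d⁻¹ * (c * c') * d⁻¹⁻¹ * (c * c')⁻¹)
      = u * (c * c' * d⁻¹ * c'⁻¹ * u) * (c' * d * c'⁻¹ * c⁻¹) := by group
    _ = u * u := by rw [hcomm]; group

theorem exists_symmGlue_eq (hu : u ∈ Subgroup.center G) {W : Fin (2 * ℓ + 1) → G × G}
    (hW : commutatorProd W = u * u) : ∃ z ∈ symmRepSet ℓ u, symmGlue z = W := by
  have hcomm : ∀ x, x * u⁻¹ = u⁻¹ * x :=
    fun x => Subgroup.mem_center_iff.mp (Subgroup.inv_mem _ hu) x
  rcases hlast : W (Fin.last _) with ⟨a, b⟩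
  have hW' : commutatorProd (leftBlock W) * commutatorProd (rightBlock W) * (a * b * a⁻¹ * b⁻¹)
      = u * u := by
    rw [← hW, ← commutatorElement_def, ← commutatorProd_concatBlocks (p := (a, b)), ← hlast,
      concatBlocks_leftBlock_rightBlock]
  refine ⟨(leftBlock W, a⁻¹, 1, conjReverse a⁻¹ (rightBlock W),
    u⁻¹ * commutatorProd (leftBlock W) * a, b), ⟨by group, ?_⟩, ?_⟩
  · have hinv : (commutatorProd (rightBlock W))⁻¹
        = a * b * a⁻¹ * b⁻¹ * (u * u)⁻¹ * commutatorProd (leftBlock W) := by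
      rw [← hW']
      group
    calc commutatorProd (conjReverse a⁻¹ (rightBlock W))
        = b * a⁻¹ * b⁻¹ * u⁻¹ * (u⁻¹ * commutatorProd (leftBlock W) * a) := by
          rw [commutatorProd_conjReverse, hinv]
          group
      _ = u⁻¹ * (b * a⁻¹ * b⁻¹ * (u⁻¹ * commutatorProd (leftBlock W) * a)) := by
          rw [hcomm]
          group
  · conv_rhs => rw [← concatBlocks_leftBlock_rightBlock W, hlast]
    simp only [symmGlue, inv_inv, mul_one, one_mul, conjReverse_inv_conjReverse]

theorem image_symmGlue_symmRepSet (hu : u ∈ Subgroup.center G) :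
    symmGlue '' symmRepSet ℓ u = {W | commutatorProd W = u * u} := by
  ext W
  exact ⟨fun ⟨z, hz, hzW⟩ => hzW ▸ commutatorProd_symmGlue hu hz, exists_symmGlue_eq hu⟩

end SymmetricRepresentations

section ScalarUnitary

variable {n : ℕ}

theorem Complex.exp_ofReal_mul_I_mem_unitary (θ : ℝ) : Complex.exp (θ * Complex.I) ∈ unitary ℂ := by
  rw [Unitary.mem_iff_star_mul_self, Complex.star_def, ← Complex.exp_conj, ← Complex.exp_add]
  simp

noncomputable def scalarUnitary (n : ℕ) (θ : ℝ) : Un n :=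
  ⟨Complex.exp (θ * Complex.I) • 1,
    Unitary.smul_mem_of_mem (Complex.exp_ofReal_mul_I_mem_unitary θ) (one_mem _)⟩

theorem coe_scalarUnitary (θ : ℝ) :
    (scalarUnitary n θ : Matrix (Fin n) (Fin n) ℂ) = Complex.exp (θ * Complex.I) • 1 := rfl

theorem coe_scalarUnitary_mul (θ : ℝ) (x : Un n) :
    ((scalarUnitary n θ * x : Un n) : Matrix (Fin n) (Fin n) ℂ)
      = Complex.exp (θ * Complex.I) • (x : Matrix (Fin n) (Fin n) ℂ) := by
  rw [Submonoid.coe_mul, coe_scalarUnitary, smul_mul_assoc, one_mul]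

theorem coe_eq_exp_smul_iff (θ : ℝ) (x y : Un n) :
    (x : Matrix (Fin n) (Fin n) ℂ) = Complex.exp (θ * Complex.I) • (y : Matrix (Fin n) (Fin n) ℂ)
      ↔ x = scalarUnitary n θ * y := by
  rw [← coe_scalarUnitary_mul, Subtype.coe_inj]

theorem scalarUnitary_mem_center (n : ℕ) (θ : ℝ) : scalarUnitary n θ ∈ Subgroup.center (Un n) := by
  refine Subgroup.mem_center_iff.mpr fun x => Subtype.ext ?_
  rw [coe_scalarUnitary_mul, Submonoid.coe_mul, coe_scalarUnitary, mul_smul_comm, mul_one]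

theorem scalarUnitary_add (θ θ' : ℝ) :
    scalarUnitary n (θ + θ') = scalarUnitary n θ * scalarUnitary n θ' := by
  refine Subtype.ext ?_
  rw [coe_scalarUnitary_mul, coe_scalarUnitary, coe_scalarUnitary, smul_smul, ← Complex.exp_add,
    Complex.ofReal_add, add_mul]

theorem scalarUnitary_neg (θ : ℝ) : scalarUnitary n (-θ) = (scalarUnitary n θ)⁻¹ := by
  refine eq_inv_of_mul_eq_one_left (Subtype.ext ?_)
  rw [← scalarUnitary_add, neg_add_cancel, coe_scalarUnitary]
  simp

end ScalarUnitary

theorem mfrak_eq_commutatorProd {n g : ℕ} (V : Fin g → Un n × Un n) :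
    mfrak V = commutatorProd V := rfl

theorem Phi2_eq_symmGlue (n ℓ : ℕ) :
    (Phi2 : _ → Fin (2 * ℓ + 1) → Un n × Un n) = symmGlue := by
  funext z j
  simp only [Phi2, symmGlue, concatBlocks, conjReverse]
  split_ifs with hleft hright
  · rfl
  · have hrev : (⟨2 * ℓ - 1 - j, by omega⟩ : Fin ℓ) = Fin.rev ⟨j - ℓ, by omega⟩ :=
      Fin.ext (by simp only [Fin.val_rev]; omega)
    rw [hrev]
  · rfl

theorem Z2set_eq_symmRepSet (n ℓ : ℕ) (k : ℤ) :
    Z2set n ℓ k = symmRepSet ℓ (scalarUnitary n (-(Real.pi * k / n))) := by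
  ext z
  simp only [Z2set, symmRepSet, ← scalarUnitary_neg, neg_neg,
    mfrak_eq_commutatorProd, ← coe_eq_exp_smul_iff]
  push_cast
  rfl

theorem YMset_eq (n g : ℕ) (k : ℤ) :
    YMset n g k = {W | commutatorProd W
      = scalarUnitary n (-(Real.pi * k / n)) * scalarUnitary n (-(Real.pi * k / n))} := by
  ext W
  simp only [YMset, ← scalarUnitary_add, Subtype.ext_iff, coe_scalarUnitary,
    mfrak_eq_commutatorProd]
  push_cast
  ring_nf

theorem stmt4_general (n ℓ : ℕ) (k : ℤ) :
    Phi2 '' Z2set n ℓ k = YMset n (2 * ℓ + 1) k := by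
  rw [Phi2_eq_symmGlue, Z2set_eq_symmRepSet, YMset_eq,
    image_symmGlue_symmRepSet (scalarUnitary_mem_center _ _)]

/-- the image of `Φ : Z^{ℓ,2}_{n,k} → U(n)^{2(2ℓ+1)}` is exactly
the representation variety `X^{2ℓ+1}_{n,k}`. -/
theorem stmt4 (n ℓ : ℕ) (hn : 1 ≤ n) (k : ℤ) :
    Phi2 '' Z2set n ℓ k = YMset n (2 * ℓ + 1) k :=
  stmt4_general n ℓ k
end

section
/- Let n ≥ 1, k ∈ ℤ, ℓ ≥ 0, and suppose (V, c, V', c') ∈ U(n)^{2ℓ} × U(n) × U(n)^{2ℓ} × U(n) satisfies 𝔪(V) = e^{−π√−1 k/n} c c' and 𝔪(V') = e^{π√−1 k/n} c' c. Set W = conj(V) ⊗ V' (entrywise Kronecker products of corresponding components), e = (conj(c) ⊗ c')·T, W' = V ⊗ conj(V'), and e' = (c ⊗ conj(c'))·T, all elements built from n²×n² unitary matrices. Then: (i) 𝔪(W) = e^{2π√−1 k/n} e e' and 𝔪(W') = e^{−2π√−1 k/n} e' e, i.e. (W, e, W', e') lies in the type-1 symmetric variety Z^{ℓ,1} for U(n²)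 with type parameter −2k/n; (ii) conj(W') = W and conj(e') = e, i.e. (W, e, W', e') is fixed by the involution τ̂(W, e, W', e') = (conj(W'), conj(e'), conj(W), conj(e)). -/
open Kronecker Matrix

/-- `n² × n²` complex matrices, indexed by pairs `(i,j) ∈ {1,…,n}²`. -/
noncomputable abbrev Mn2 (n : ℕ) := Matrix (Fin n × Fin n) (Fin n × Fin n) ℂ

/-- `∏ᵢ [aᵢ, bᵢ]` for a tuple of pairs of `n² × n²` matrices. -/
noncomputable def mfrakM {n ℓ : ℕ} (W : Fin ℓ → Mn2 n × Mn2 n) : Mn2 n :=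
  (List.ofFn (fun i => (W i).1 * (W i).2 * (W i).1⁻¹ * (W i).2⁻¹)).prod

/-- Entrywise complex conjugation of a matrix. -/
noncomputable def conjM {m m' : Type*} (A : Matrix m m' ℂ) : Matrix m m' ℂ :=
  A.map (starRingEnd ℂ)

/-- The `n²×n²` commutation matrix `T`, `T_{(i,j),(p,q)} = δ_{iq} δ_{jp}`. -/
noncomputable def Tmat (n : ℕ) : Mn2 n :=
  fun p q => if p.1 = q.2 ∧ p.2 = q.1 then 1 else 0

namespace Stmt8Aux

variable {n : ℕ}

lemma conjM_mul {m : Type*} [Fintype m] [DecidableEq m] (A B : Matrix m m ℂ) :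
    conjM (A * B) = conjM A * conjM B := _root_.Matrix.map_mul

lemma conjM_one {m : Type*} [Fintype m] [DecidableEq m] :
    conjM (1 : Matrix m m ℂ) = 1 := Matrix.map_one _ (map_zero _) (map_one _)

lemma conjM_conjM {m m' : Type*} (A : Matrix m m' ℂ) : conjM (conjM A) = A := by
  ext i j; simp [conjM]

lemma conjM_kron (A B : Matrix (Fin n) (Fin n) ℂ) :
    conjM (A ⊗ₖ B) = conjM A ⊗ₖ conjM B := by
  ext ⟨i, j⟩ ⟨p, q⟩
  simp [conjM, Matrix.kroneckerMap_apply, _root_.map_mul]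

lemma conjM_smul {m m' : Type*} (s : ℂ) (A : Matrix m m' ℂ) :
    conjM (s • A) = (starRingEnd ℂ s) • conjM A := by
  ext i j; simp [conjM]

lemma conjM_Tmat : conjM (Tmat n) = Tmat n := by
  ext ⟨i, j⟩ ⟨p, q⟩
  simp only [conjM, Tmat, Matrix.map_apply]
  split <;> simp

lemma Tmat_mul_kron (A B : Matrix (Fin n) (Fin n) ℂ) :
    Tmat n * (A ⊗ₖ B) = (B ⊗ₖ A) * Tmat n := by
  ext ⟨i, j⟩ ⟨p, q⟩
  simp [Tmat, Matrix.mul_apply, Fintype.sum_prod_type, ite_and, mul_comm]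

lemma Tmat_mul_Tmat : Tmat n * Tmat n = (1 : Mn2 n) := by
  ext ⟨i, j⟩ ⟨p, q⟩
  simp [Tmat, Matrix.mul_apply, Fintype.sum_prod_type, Matrix.one_apply, Prod.ext_iff,
    ite_and, eq_comm]

lemma coe_inv_mul (u : Un n) :
    ((u⁻¹ : Un n) : Matrix (Fin n) (Fin n) ℂ) * u = 1 := by simp

lemma kron_inv (f g : Matrix (Fin n) (Fin n) ℂ → Matrix (Fin n) (Fin n) ℂ)
    (hf1 : f 1 = 1) (hfm : ∀ A B, f (A * B) = f A * f B)
    (hg1 : g 1 = 1) (hgm : ∀ A B, g (A * B) = g A * g B) (u u' : Un n) :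
    (f (u : Matrix (Fin n) (Fin n) ℂ) ⊗ₖ g (u' : Matrix (Fin n) (Fin n) ℂ))⁻¹
      = f ((u⁻¹ : Un n) : Matrix (Fin n) (Fin n) ℂ)
          ⊗ₖ g ((u'⁻¹ : Un n) : Matrix (Fin n) (Fin n) ℂ) := by
  apply Matrix.inv_eq_left_inv
  rw [← Matrix.mul_kronecker_mul, ← hfm, ← hgm, coe_inv_mul, coe_inv_mul, hf1, hg1,
    Matrix.one_kronecker_one]

lemma key_gen (f g : Matrix (Fin n) (Fin n) ℂ → Matrix (Fin n) (Fin n) ℂ)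
    (hf1 : f 1 = 1) (hfm : ∀ A B, f (A * B) = f A * f B)
    (hg1 : g 1 = 1) (hgm : ∀ A B, g (A * B) = g A * g B)
    {ℓ : ℕ} (V V' : Fin ℓ → Un n × Un n) :
    mfrakM (fun i => (f ((V i).1 : Matrix (Fin n) (Fin n) ℂ) ⊗ₖ g ((V' i).1 : Matrix (Fin n) (Fin n) ℂ),
        f ((V i).2 : Matrix (Fin n) (Fin n) ℂ) ⊗ₖ g ((V' i).2 : Matrix (Fin n) (Fin n) ℂ)))
      = f ((mfrak V : Un n) : Matrix (Fin n) (Fin n) ℂ)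
          ⊗ₖ g ((mfrak V' : Un n) : Matrix (Fin n) (Fin n) ℂ) := by
  induction ℓ with
  | zero =>
      simp [mfrakM, mfrak, hf1, hg1, Matrix.one_kronecker_one]
  | succ m ih =>
      have coe_mul : ∀ u v : Un n,
          ((u * v : Un n) : Matrix (Fin n) (Fin n) ℂ) = (u : Matrix (Fin n) (Fin n) ℂ) * v := by
        intro u v; simp
      rw [mfrakM, mfrak, mfrak, List.ofFn_succ, List.ofFn_succ, List.ofFn_succ,
        List.prod_cons, List.prod_cons, List.prod_cons]
      have ht := ih (fun i => V i.succ) (fun i => V' i.succ)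
      rw [mfrakM, mfrak, mfrak] at ht
      rw [ht]
      simp only [coe_mul, hfm, hgm, kron_inv f g hf1 hfm hg1 hgm,
        Matrix.mul_kronecker_mul, mul_assoc]

end Stmt8Aux

open Stmt8Aux

set_option linter.unusedVariables false in
/-- given `(V, c, V', c')` satisfying the type-1 relations for `U(n)`
with parameter `k/n`, the tuple `W = conj(V) ⊗ V'`, `e = (conj c ⊗ c')·T`,
`W' = V ⊗ conj(V')`, `e' = (c ⊗ conj c')·T` satisfies
(i) `𝔪(W) = e^{2π√-1 k/n} e e'` and `𝔪(W') = e^{-2π√-1 k/n} e' e`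
(the type-1 relations for `U(n²)` with parameter `-2k/n`), and
(ii) `conj W' = W` and `conj e' = e` (fixed by the involution `τ̂`). -/
theorem stmt8 (n ℓ : ℕ) (hn : 1 ≤ n) (k : ℤ)
    (V V' : Fin ℓ → Un n × Un n) (c c' : Un n)
    (h1 : (mfrak V : Matrix (Fin n) (Fin n) ℂ)
        = Complex.exp (-(Real.pi * (k : ℝ) / (n : ℝ)) * Complex.I) •
            ((c * c' : Un n) : Matrix (Fin n) (Fin n) ℂ))
    (h2 : (mfrak V' : Matrix (Fin n) (Fin n) ℂ)
        = Complex.exp ((Real.pi * (k : ℝ) / (n : ℝ)) * Complex.I) •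
            ((c' * c : Un n) : Matrix (Fin n) (Fin n) ℂ)) :
    let W : Fin ℓ → Mn2 n × Mn2 n := fun i =>
      (conjM ((V i).1 : Matrix (Fin n) (Fin n) ℂ) ⊗ₖ ((V' i).1 : Matrix (Fin n) (Fin n) ℂ),
       conjM ((V i).2 : Matrix (Fin n) (Fin n) ℂ) ⊗ₖ ((V' i).2 : Matrix (Fin n) (Fin n) ℂ))
    let W' : Fin ℓ → Mn2 n × Mn2 n := fun i =>
      (((V i).1 : Matrix (Fin n) (Fin n) ℂ) ⊗ₖ conjM ((V' i).1 : Matrix (Fin n) (Fin n) ℂ),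
       ((V i).2 : Matrix (Fin n) (Fin n) ℂ) ⊗ₖ conjM ((V' i).2 : Matrix (Fin n) (Fin n) ℂ))
    let e : Mn2 n := (conjM (c : Matrix (Fin n) (Fin n) ℂ) ⊗ₖ
        ((c' : Matrix (Fin n) (Fin n) ℂ))) * Tmat n
    let e' : Mn2 n := (((c : Matrix (Fin n) (Fin n) ℂ)) ⊗ₖ
        conjM ((c' : Matrix (Fin n) (Fin n) ℂ))) * Tmat n
    (mfrakM W = Complex.exp ((2 * Real.pi * (k : ℝ) / (n : ℝ)) * Complex.I) • (e * e') ∧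
     mfrakM W' = Complex.exp (-(2 * Real.pi * (k : ℝ) / (n : ℝ)) * Complex.I) • (e' * e)) ∧
    ((∀ i, conjM ((W' i).1) = (W i).1 ∧ conjM ((W' i).2) = (W i).2) ∧ conjM e' = e) := by
  intro W W' e e'
  have coe_mul : ∀ u v : Un n,
      ((u * v : Un n) : Matrix (Fin n) (Fin n) ℂ) = (u : Matrix (Fin n) (Fin n) ℂ) * v := by
    intro u v; simp
  have hid1 : (id : Matrix (Fin n) (Fin n) ℂ → Matrix (Fin n) (Fin n) ℂ) 1 = 1 := rfl
  have hidm : ∀ A B : Matrix (Fin n) (Fin n) ℂ, (id : _ → _) (A * B) = id A * id B :=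
    fun _ _ => rfl
  -- exp facts
  have hconj : ∀ x : ℝ, (starRingEnd ℂ) (Complex.exp ((x : ℝ) * Complex.I))
      = Complex.exp ((-x : ℝ) * Complex.I) := by
    intro x
    rw [← Complex.exp_conj]
    congr 1
    simp [Complex.ext_iff]
  have hTT : Tmat n * Tmat n = (1 : Mn2 n) := Tmat_mul_Tmat
  constructor
  · constructor
    · -- first relation
      have key := key_gen (n := n) conjM id conjM_one conjM_mul hid1 hidm V V'
      have hee : e * e' = (conjM (c : Matrix (Fin n) (Fin n) ℂ) *
          conjM (c' : Matrix (Fin n) (Fin n) ℂ)) ⊗ₖ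
          ((c' : Matrix (Fin n) (Fin n) ℂ) * (c : Matrix (Fin n) (Fin n) ℂ)) := by
        show (conjM (c : Matrix (Fin n) (Fin n) ℂ) ⊗ₖ ((c' : Matrix (Fin n) (Fin n) ℂ))) * Tmat n *
            ((((c : Matrix (Fin n) (Fin n) ℂ)) ⊗ₖ conjM ((c' : Matrix (Fin n) (Fin n) ℂ))) * Tmat n) = _
        rw [mul_assoc, ← mul_assoc (Tmat n), Tmat_mul_kron, mul_assoc _ (Tmat n), hTT,
          mul_one, ← Matrix.mul_kronecker_mul]
      have : mfrakM W = conjM ((mfrak V : Un n) : Matrix (Fin n) (Fin n) ℂ)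
          ⊗ₖ ((mfrak V' : Un n) : Matrix (Fin n) (Fin n) ℂ) := key
      rw [this, h1, h2, coe_mul, coe_mul, conjM_smul, conjM_mul,
        Matrix.smul_kronecker, Matrix.kronecker_smul, smul_smul, hee]
      congr 1
      rw [← Complex.exp_conj, ← Complex.exp_add]
      congr 1
      simp only [_root_.map_mul, _root_.map_neg, map_div₀, Complex.conj_I, Complex.conj_ofReal]
      ring
    · -- second relation
      have key := key_gen (n := n) id conjM hid1 hidm conjM_one conjM_mul V V'
      have hee : e' * e = ((c : Matrix (Fin n) (Fin n) ℂ) * (c' : Matrix (Fin n) (Fin n) ℂ)) ⊗ₖ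
          (conjM (c' : Matrix (Fin n) (Fin n) ℂ) * conjM (c : Matrix (Fin n) (Fin n) ℂ)) := by
        show (((c : Matrix (Fin n) (Fin n) ℂ)) ⊗ₖ conjM ((c' : Matrix (Fin n) (Fin n) ℂ))) * Tmat n *
            ((conjM (c : Matrix (Fin n) (Fin n) ℂ) ⊗ₖ ((c' : Matrix (Fin n) (Fin n) ℂ))) * Tmat n) = _
        rw [mul_assoc, ← mul_assoc (Tmat n), Tmat_mul_kron, mul_assoc _ (Tmat n), hTT,
          mul_one, ← Matrix.mul_kronecker_mul]
      have : mfrakM W' = ((mfrak V : Un n) : Matrix (Fin n) (Fin n) ℂ)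
          ⊗ₖ conjM ((mfrak V' : Un n) : Matrix (Fin n) (Fin n) ℂ) := key
      rw [this, h1, h2, coe_mul, coe_mul, conjM_smul, conjM_mul,
        Matrix.smul_kronecker, Matrix.kronecker_smul, smul_smul, hee]
      congr 1
      rw [← Complex.exp_conj, ← Complex.exp_add]
      congr 1
      simp only [_root_.map_mul, _root_.map_neg, map_div₀, Complex.conj_I, Complex.conj_ofReal]
      ring
  · constructor
    · intro i
      constructor <;> simp only [W, W', conjM_kron, conjM_conjM]
    · show conjM ((((c : Matrix (Fin n) (Fin n) ℂ)) ⊗ₖ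
        conjM ((c' : Matrix (Fin n) (Fin n) ℂ))) * Tmat n) = e
      rw [conjM_mul, conjM_kron, conjM_conjM, conjM_Tmat]
end

section
/- Let n ≥ 1, k ∈ ℤ, ℓ ≥ 0, and suppose (V, d, c, V', d', c') with V, V' ∈ U(n)^{2ℓ} and d, c, d', c' ∈ U(n) satisfies 𝔪(V) = e^{−π√−1 k/n} c d' c⁻¹ d and 𝔪(V') = e^{π√−1 k/n} c' d (c')⁻¹ d'. Set W = conj(V) ⊗ V', f = conj(d) ⊗ d', e = (conj(c) ⊗ c')·T, W' = V ⊗ conj(V'), f' = d ⊗ conj(d'), e' = (c ⊗ conj(c'))·T, all built from n²×n² unitary matrices. Then: (i) 𝔪(W) = e^{2π√−1 k/n} e f' e⁻¹ f and 𝔪(W') = e^{−2π√−1 k/n} e' f (e')⁻¹ f', i.e. (W, f, e, W', f', e') lies in the type-2 symmetric variety Z^{ℓ,2} for U(n²) with type parameter −2k/n; (ii) conj(W') = W, conj(f') = f and conj(e') = e, i.e. the tuple is fixed by the involution τ̂(W, f, e, W', f', e') = (conj(W'), conj(f'), conj(e'), conj(W), conj(f), conj(e)). -/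
open Kronecker Matrix

variable {n : ℕ}

lemma conjM_mul {m : Type*} [Fintype m] (A B : Matrix m m ℂ) :
    conjM (A * B) = conjM A * conjM B := Matrix.map_mul

lemma conjM_one {m : Type*} [Fintype m] [DecidableEq m] :
    conjM (1 : Matrix m m ℂ) = 1 := Matrix.map_one _ (map_zero _) (map_one _)

lemma conjM_conjM {m m' : Type*} (A : Matrix m m' ℂ) : conjM (conjM A) = A := by
  ext i j; simp [conjM]

lemma conjM_kron (A B : Matrix (Fin n) (Fin n) ℂ) :
    conjM (A ⊗ₖ B) = conjM A ⊗ₖ conjM B := by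
  ext ⟨i,j⟩ ⟨p,q⟩; simp [conjM, Matrix.kroneckerMap_apply]

lemma conjM_smul {m m' : Type*} (z : ℂ) (A : Matrix m m' ℂ) :
    conjM (z • A) = (starRingEnd ℂ z) • conjM A := by
  ext i j; simp [conjM]

lemma conjM_T : conjM (Tmat n) = Tmat n := by
  ext ⟨i,j⟩ ⟨p,q⟩
  simp only [conjM, Tmat, Matrix.map_apply]
  split_ifs <;> simp

lemma T_mul_apply (M : Mn2 n) (p q : Fin n × Fin n) :
    (Tmat n * M) p q = M (p.2, p.1) q := by
  simp only [Matrix.mul_apply, Tmat]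
  rw [Finset.sum_eq_single ((p.2, p.1) : Fin n × Fin n)]
  · simp
  · intro b _ hb
    have : ¬(p.1 = b.2 ∧ p.2 = b.1) := by
      rintro ⟨h1, h2⟩; exact hb (Prod.ext h2.symm h1.symm)
    simp [this]
  · simp

lemma mul_T_apply (M : Mn2 n) (p q : Fin n × Fin n) :
    (M * Tmat n) p q = M p (q.2, q.1) := by
  simp only [Matrix.mul_apply, Tmat]
  rw [Finset.sum_eq_single ((q.2, q.1) : Fin n × Fin n)]
  · simp
  · intro b _ hb
    have : ¬(b.1 = q.2 ∧ b.2 = q.1) := by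
      rintro ⟨h1, h2⟩; exact hb (Prod.ext h1 h2)
    simp [this]
  · simp

lemma T_mul_T : Tmat n * Tmat n = 1 := by
  ext p q
  rw [T_mul_apply]
  simp only [Tmat, Matrix.one_apply, Prod.ext_iff]
  aesop

lemma T_mul_kron (A B : Matrix (Fin n) (Fin n) ℂ) :
    Tmat n * (A ⊗ₖ B) = (B ⊗ₖ A) * Tmat n := by
  ext p q
  rw [T_mul_apply, mul_T_apply]
  simp [Matrix.kroneckerMap_apply, mul_comm]


lemma ofFn_prod_kron {ℓ : ℕ} (F G : Fin ℓ → Matrix (Fin n) (Fin n) ℂ) :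
    (List.ofFn (fun i => F i ⊗ₖ G i)).prod
      = (List.ofFn F).prod ⊗ₖ (List.ofFn G).prod := by
  induction ℓ with
  | zero => simp [Matrix.one_kronecker_one]
  | succ m ih =>
      rw [List.ofFn_succ, List.ofFn_succ (f := F), List.ofFn_succ (f := G),
        List.prod_cons, List.prod_cons, List.prod_cons, ih, Matrix.mul_kronecker_mul]

lemma coe_unitary_mul_inv (a : Un n) :
    (a : Matrix (Fin n) (Fin n) ℂ) * ((a⁻¹ : Un n) : Matrix (Fin n) (Fin n) ℂ) = 1 := by
  rw [← Matrix.UnitaryGroup.mul_val, mul_inv_cancel, Matrix.UnitaryGroup.one_val]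

lemma kron_inv₁ (a b : Un n) :
    ((conjM (a : Matrix (Fin n) (Fin n) ℂ) ⊗ₖ (b : Matrix (Fin n) (Fin n) ℂ) : Mn2 n))⁻¹
      = conjM ((a⁻¹ : Un n) : Matrix (Fin n) (Fin n) ℂ)
          ⊗ₖ ((b⁻¹ : Un n) : Matrix (Fin n) (Fin n) ℂ) := by
  apply Matrix.inv_eq_right_inv
  rw [← Matrix.mul_kronecker_mul, ← conjM_mul, coe_unitary_mul_inv, coe_unitary_mul_inv,
    conjM_one, Matrix.one_kronecker_one]

lemma kron_inv₂ (a b : Un n) :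
    (((a : Matrix (Fin n) (Fin n) ℂ) ⊗ₖ conjM (b : Matrix (Fin n) (Fin n) ℂ) : Mn2 n))⁻¹
      = ((a⁻¹ : Un n) : Matrix (Fin n) (Fin n) ℂ)
          ⊗ₖ conjM ((b⁻¹ : Un n) : Matrix (Fin n) (Fin n) ℂ) := by
  apply Matrix.inv_eq_right_inv
  rw [← Matrix.mul_kronecker_mul, ← conjM_mul, coe_unitary_mul_inv, coe_unitary_mul_inv,
    conjM_one, Matrix.one_kronecker_one]

lemma coe_mfrak {ℓ : ℕ} (V : Fin ℓ → Un n × Un n) :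
    ((mfrak V : Un n) : Matrix (Fin n) (Fin n) ℂ)
      = (List.ofFn (fun i => ((((V i).1 * (V i).2 * (V i).1⁻¹ * (V i).2⁻¹ : Un n))
          : Matrix (Fin n) (Fin n) ℂ))).prod := by
  rw [mfrak, SubmonoidClass.coe_list_prod, List.map_ofFn]
  rfl

lemma ofFn_prod_conjM {m : Type*} [Fintype m] [DecidableEq m] {ℓ : ℕ}
    (F : Fin ℓ → Matrix m m ℂ) :
    (List.ofFn (fun i => conjM (F i))).prod = conjM (List.ofFn F).prod := by
  induction ℓ with
  | zero => simp [conjM_one]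
  | succ k ih =>
      rw [List.ofFn_succ, List.ofFn_succ (f := F), List.prod_cons, List.prod_cons,
        conjM_mul, ih]

lemma mfrakM_kron₁ {ℓ : ℕ} (V V' : Fin ℓ → Un n × Un n) :
    mfrakM (fun i =>
      (conjM ((V i).1 : Matrix (Fin n) (Fin n) ℂ) ⊗ₖ ((V' i).1 : Matrix (Fin n) (Fin n) ℂ),
       conjM ((V i).2 : Matrix (Fin n) (Fin n) ℂ) ⊗ₖ ((V' i).2 : Matrix (Fin n) (Fin n) ℂ)))
      = conjM ((mfrak V : Un n) : Matrix (Fin n) (Fin n) ℂ)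
          ⊗ₖ ((mfrak V' : Un n) : Matrix (Fin n) (Fin n) ℂ) := by
  rw [mfrakM]
  have : ∀ i : Fin ℓ,
      (conjM ((V i).1 : Matrix (Fin n) (Fin n) ℂ) ⊗ₖ ((V' i).1 : Matrix (Fin n) (Fin n) ℂ))
        * (conjM ((V i).2 : Matrix (Fin n) (Fin n) ℂ) ⊗ₖ ((V' i).2 : Matrix (Fin n) (Fin n) ℂ))
        * (conjM ((V i).1 : Matrix (Fin n) (Fin n) ℂ) ⊗ₖ ((V' i).1 : Matrix (Fin n) (Fin n) ℂ))⁻¹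
        * (conjM ((V i).2 : Matrix (Fin n) (Fin n) ℂ) ⊗ₖ ((V' i).2 : Matrix (Fin n) (Fin n) ℂ))⁻¹
      = conjM ((((V i).1 * (V i).2 * (V i).1⁻¹ * (V i).2⁻¹ : Un n)) : Matrix (Fin n) (Fin n) ℂ)
          ⊗ₖ ((((V' i).1 * (V' i).2 * (V' i).1⁻¹ * (V' i).2⁻¹ : Un n)) : Matrix (Fin n) (Fin n) ℂ) := by
    intro i
    rw [kron_inv₁, kron_inv₁, ← Matrix.mul_kronecker_mul, ← Matrix.mul_kronecker_mul,
      ← Matrix.mul_kronecker_mul, ← conjM_mul, ← conjM_mul, ← conjM_mul]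
    rfl
  simp only [this]
  rw [ofFn_prod_kron, ← coe_mfrak V', ofFn_prod_conjM, ← coe_mfrak V]

lemma mfrakM_kron₂ {ℓ : ℕ} (V V' : Fin ℓ → Un n × Un n) :
    mfrakM (fun i =>
      (((V i).1 : Matrix (Fin n) (Fin n) ℂ) ⊗ₖ conjM ((V' i).1 : Matrix (Fin n) (Fin n) ℂ),
       ((V i).2 : Matrix (Fin n) (Fin n) ℂ) ⊗ₖ conjM ((V' i).2 : Matrix (Fin n) (Fin n) ℂ)))
      = ((mfrak V : Un n) : Matrix (Fin n) (Fin n) ℂ)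
          ⊗ₖ conjM ((mfrak V' : Un n) : Matrix (Fin n) (Fin n) ℂ) := by
  rw [mfrakM]
  have : ∀ i : Fin ℓ,
      (((V i).1 : Matrix (Fin n) (Fin n) ℂ) ⊗ₖ conjM ((V' i).1 : Matrix (Fin n) (Fin n) ℂ))
        * (((V i).2 : Matrix (Fin n) (Fin n) ℂ) ⊗ₖ conjM ((V' i).2 : Matrix (Fin n) (Fin n) ℂ))
        * (((V i).1 : Matrix (Fin n) (Fin n) ℂ) ⊗ₖ conjM ((V' i).1 : Matrix (Fin n) (Fin n) ℂ))⁻¹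
        * (((V i).2 : Matrix (Fin n) (Fin n) ℂ) ⊗ₖ conjM ((V' i).2 : Matrix (Fin n) (Fin n) ℂ))⁻¹
      = ((((V i).1 * (V i).2 * (V i).1⁻¹ * (V i).2⁻¹ : Un n)) : Matrix (Fin n) (Fin n) ℂ)
          ⊗ₖ conjM ((((V' i).1 * (V' i).2 * (V' i).1⁻¹ * (V' i).2⁻¹ : Un n)) : Matrix (Fin n) (Fin n) ℂ) := by
    intro i
    rw [kron_inv₂, kron_inv₂, ← Matrix.mul_kronecker_mul, ← Matrix.mul_kronecker_mul,
      ← Matrix.mul_kronecker_mul, ← conjM_mul, ← conjM_mul, ← conjM_mul]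
    rfl
  simp only [this]
  rw [ofFn_prod_kron, ← coe_mfrak V, ofFn_prod_conjM, ← coe_mfrak V']

lemma sandwich_aux (X Y A B F : Mn2 n) (hT : Tmat n * A = B * Tmat n) :
    X * Tmat n * A * (Tmat n * Y) * F = X * B * Y * F := by
  rw [mul_assoc X (Tmat n) A, hT, ← mul_assoc X B (Tmat n),
    mul_assoc (X * B) (Tmat n) (Tmat n * Y), ← mul_assoc (Tmat n) (Tmat n) Y,
    T_mul_T, one_mul]

lemma e_inv₁ (c c' : Un n) :
    ((conjM (c : Matrix (Fin n) (Fin n) ℂ) ⊗ₖ (c' : Matrix (Fin n) (Fin n) ℂ)) * Tmat n)⁻¹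
      = Tmat n * (conjM ((c⁻¹ : Un n) : Matrix (Fin n) (Fin n) ℂ)
          ⊗ₖ ((c'⁻¹ : Un n) : Matrix (Fin n) (Fin n) ℂ)) := by
  apply Matrix.inv_eq_right_inv
  rw [mul_assoc, ← mul_assoc (Tmat n) (Tmat n), T_mul_T, one_mul,
    ← Matrix.mul_kronecker_mul, ← conjM_mul, coe_unitary_mul_inv, coe_unitary_mul_inv,
    conjM_one, Matrix.one_kronecker_one]

lemma e_inv₂ (c c' : Un n) :
    (((c : Matrix (Fin n) (Fin n) ℂ) ⊗ₖ conjM (c' : Matrix (Fin n) (Fin n) ℂ)) * Tmat n)⁻¹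
      = Tmat n * (((c⁻¹ : Un n) : Matrix (Fin n) (Fin n) ℂ)
          ⊗ₖ conjM ((c'⁻¹ : Un n) : Matrix (Fin n) (Fin n) ℂ)) := by
  apply Matrix.inv_eq_right_inv
  rw [mul_assoc, ← mul_assoc (Tmat n) (Tmat n), T_mul_T, one_mul,
    ← Matrix.mul_kronecker_mul, ← conjM_mul, coe_unitary_mul_inv, coe_unitary_mul_inv,
    conjM_one, Matrix.one_kronecker_one]

lemma efef₁ (c c' d d' : Un n) :
    ((conjM (c : Matrix (Fin n) (Fin n) ℂ) ⊗ₖ (c' : Matrix (Fin n) (Fin n) ℂ)) * Tmat n)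
      * ((d : Matrix (Fin n) (Fin n) ℂ) ⊗ₖ conjM (d' : Matrix (Fin n) (Fin n) ℂ))
      * ((conjM (c : Matrix (Fin n) (Fin n) ℂ) ⊗ₖ (c' : Matrix (Fin n) (Fin n) ℂ)) * Tmat n)⁻¹
      * (conjM (d : Matrix (Fin n) (Fin n) ℂ) ⊗ₖ (d' : Matrix (Fin n) (Fin n) ℂ))
    = conjM (((c * d' * c⁻¹ * d : Un n)) : Matrix (Fin n) (Fin n) ℂ)
        ⊗ₖ (((c' * d * c'⁻¹ * d' : Un n)) : Matrix (Fin n) (Fin n) ℂ) := by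
  rw [e_inv₁, sandwich_aux _ _ _ _ _ (T_mul_kron _ _),
    ← Matrix.mul_kronecker_mul, ← Matrix.mul_kronecker_mul, ← Matrix.mul_kronecker_mul,
    ← conjM_mul, ← conjM_mul, ← conjM_mul]
  rfl

lemma efef₂ (c c' d d' : Un n) :
    (((c : Matrix (Fin n) (Fin n) ℂ) ⊗ₖ conjM (c' : Matrix (Fin n) (Fin n) ℂ)) * Tmat n)
      * (conjM (d : Matrix (Fin n) (Fin n) ℂ) ⊗ₖ (d' : Matrix (Fin n) (Fin n) ℂ))
      * (((c : Matrix (Fin n) (Fin n) ℂ) ⊗ₖ conjM (c' : Matrix (Fin n) (Fin n) ℂ)) * Tmat n)⁻¹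
      * ((d : Matrix (Fin n) (Fin n) ℂ) ⊗ₖ conjM (d' : Matrix (Fin n) (Fin n) ℂ))
    = (((c * d' * c⁻¹ * d : Un n)) : Matrix (Fin n) (Fin n) ℂ)
        ⊗ₖ conjM (((c' * d * c'⁻¹ * d' : Un n)) : Matrix (Fin n) (Fin n) ℂ) := by
  rw [e_inv₂, sandwich_aux _ _ _ _ _ (T_mul_kron _ _),
    ← Matrix.mul_kronecker_mul, ← Matrix.mul_kronecker_mul, ← Matrix.mul_kronecker_mul,
    ← conjM_mul, ← conjM_mul, ← conjM_mul]
  rfl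


/-- given `(V, d, c, V', d', c')` satisfying the type-2 relations for
`U(n)` with parameter `k/n`, the tuple `W = conj(V) ⊗ V'`, `f = conj d ⊗ d'`,
`e = (conj c ⊗ c')·T`, `W' = V ⊗ conj(V')`, `f' = d ⊗ conj d'`,
`e' = (c ⊗ conj c')·T` satisfies
(i) `𝔪(W) = e^{2π√-1 k/n} e f' e⁻¹ f` and `𝔪(W') = e^{-2π√-1 k/n} e' f (e')⁻¹ f'`
(the type-2 relations for `U(n²)` with parameter `-2k/n`), and
(ii) `conj W' = W`, `conj f' = f`, `conj e' = e` (fixed by the involution `τ̂`). -/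
theorem stmt9 (n ℓ : ℕ) (hn : 1 ≤ n) (k : ℤ)
    (V V' : Fin ℓ → Un n × Un n) (d c d' c' : Un n)
    (h1 : (mfrak V : Matrix (Fin n) (Fin n) ℂ)
        = Complex.exp (-(Real.pi * (k : ℝ) / (n : ℝ)) * Complex.I) •
            ((c * d' * c⁻¹ * d : Un n) : Matrix (Fin n) (Fin n) ℂ))
    (h2 : (mfrak V' : Matrix (Fin n) (Fin n) ℂ)
        = Complex.exp ((Real.pi * (k : ℝ) / (n : ℝ)) * Complex.I) •
            ((c' * d * c'⁻¹ * d' : Un n) : Matrix (Fin n) (Fin n) ℂ)) :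
    let W : Fin ℓ → Mn2 n × Mn2 n := fun i =>
      (conjM ((V i).1 : Matrix (Fin n) (Fin n) ℂ) ⊗ₖ ((V' i).1 : Matrix (Fin n) (Fin n) ℂ),
       conjM ((V i).2 : Matrix (Fin n) (Fin n) ℂ) ⊗ₖ ((V' i).2 : Matrix (Fin n) (Fin n) ℂ))
    let W' : Fin ℓ → Mn2 n × Mn2 n := fun i =>
      (((V i).1 : Matrix (Fin n) (Fin n) ℂ) ⊗ₖ conjM ((V' i).1 : Matrix (Fin n) (Fin n) ℂ),
       ((V i).2 : Matrix (Fin n) (Fin n) ℂ) ⊗ₖ conjM ((V' i).2 : Matrix (Fin n) (Fin n) ℂ))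
    let f : Mn2 n := conjM ((d : Matrix (Fin n) (Fin n) ℂ)) ⊗ₖ ((d' : Matrix (Fin n) (Fin n) ℂ))
    let f' : Mn2 n := ((d : Matrix (Fin n) (Fin n) ℂ)) ⊗ₖ conjM ((d' : Matrix (Fin n) (Fin n) ℂ))
    let e : Mn2 n := (conjM ((c : Matrix (Fin n) (Fin n) ℂ)) ⊗ₖ
        ((c' : Matrix (Fin n) (Fin n) ℂ))) * Tmat n
    let e' : Mn2 n := (((c : Matrix (Fin n) (Fin n) ℂ)) ⊗ₖ
        conjM ((c' : Matrix (Fin n) (Fin n) ℂ))) * Tmat n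
    (mfrakM W
        = Complex.exp ((2 * Real.pi * (k : ℝ) / (n : ℝ)) * Complex.I) • (e * f' * e⁻¹ * f) ∧
     mfrakM W'
        = Complex.exp (-(2 * Real.pi * (k : ℝ) / (n : ℝ)) * Complex.I) • (e' * f * e'⁻¹ * f')) ∧
    ((∀ i, conjM ((W' i).1) = (W i).1 ∧ conjM ((W' i).2) = (W i).2) ∧
      conjM f' = f ∧ conjM e' = e) := by
  intro W W' f f' e e'
  refine ⟨⟨?_, ?_⟩, fun i => ⟨?_, ?_⟩, ?_, ?_⟩
  · simp only [W, e, f, f']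
    rw [mfrakM_kron₁ V V', h1, h2, conjM_smul, Matrix.smul_kronecker, Matrix.kronecker_smul,
      smul_smul, efef₁]
    congr 1
    rw [← Complex.exp_conj, ← Complex.exp_add]
    congr 1
    simp only [_root_.map_mul, _root_.map_neg, map_div₀, Complex.conj_ofReal, Complex.conj_I]
    push_cast
    ring
  · simp only [W', e', f, f']
    rw [mfrakM_kron₂ V V', h1, h2, conjM_smul, Matrix.smul_kronecker, Matrix.kronecker_smul,
      smul_smul, efef₂]
    congr 1
    rw [← Complex.exp_conj, ← Complex.exp_add]
    congr 1
    simp only [_root_.map_mul, _root_.map_neg, map_div₀, Complex.conj_ofReal, Complex.conj_I]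
    push_cast
    ring
  · simp only [W, W', conjM_kron, conjM_conjM]
  · simp only [W, W', conjM_kron, conjM_conjM]
  · simp only [f, f', conjM_kron, conjM_conjM]
  · simp only [e, e', conjM_mul, conjM_kron, conjM_conjM, conjM_T]
end

section
/- For every n ≥ 1 there exists a continuous path χ : [0,1] → U(n²) such that χ(0) = T (the commutation matrix), χ(1) = I_{n²}, conj(χ(t)) = χ(t)⁻¹ for every t ∈ [0,1], and χ(t) commutes with A ⊗ A for every n×n complex matrix A and every t ∈ [0,1]. (Explicitly one may take χ(t) = P₊ − e^{π√−1 t} P₋, where P₊ = (I + T)/2 and P₋ = (I − T)/2 are the orthogonal projections onto the symmetric and antisymmetric parts of ℂⁿ ⊗ ℂⁿ.) -/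
open Kronecker Matrix

lemma Tmat_mul {n : ℕ} (M : Mn2 n) : Tmat n * M = fun p q => M p.swap q := by
  ext p q
  rw [Matrix.mul_apply, Finset.sum_eq_single p.swap]
  · simp [Tmat]
  · intro b _ hb
    have : ¬(p.1 = b.2 ∧ p.2 = b.1) := by
      rintro ⟨h1, h2⟩; exact hb (Prod.ext h2.symm h1.symm)
    simp [Tmat, this]
  · simp

lemma mul_Tmat {n : ℕ} (M : Mn2 n) : M * Tmat n = fun p q => M p q.swap := by
  ext p q
  rw [Matrix.mul_apply, Finset.sum_eq_single q.swap]
  · simp [Tmat]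
  · intro b _ hb
    have : ¬(b.1 = q.2 ∧ b.2 = q.1) := by
      rintro ⟨h1, h2⟩; exact hb (Prod.ext h1 h2)
    simp [Tmat, this]
  · simp

lemma Tmat_sq {n : ℕ} : Tmat n * Tmat n = 1 := by
  rw [Tmat_mul]
  ext p q
  simp [Tmat, Matrix.one_apply, Prod.ext_iff, and_comm]

lemma star_Tmat {n : ℕ} : star (Tmat n) = Tmat n := by
  ext p q
  rw [Matrix.star_apply]
  simp only [Tmat]
  by_cases h : p.1 = q.2 ∧ p.2 = q.1
  · rw [if_pos h, if_pos ⟨h.2.symm, h.1.symm⟩, star_one]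
  · rw [if_neg h, if_neg (fun hc => h ⟨hc.2.symm, hc.1.symm⟩), star_zero]

lemma transpose_Tmat {n : ℕ} : (Tmat n)ᵀ = Tmat n := by
  ext p q
  simp only [Matrix.transpose_apply, Tmat]
  by_cases h : p.1 = q.2 ∧ p.2 = q.1
  · rw [if_pos h, if_pos ⟨h.2.symm, h.1.symm⟩]
  · rw [if_neg h, if_neg (fun hc => h ⟨hc.2.symm, hc.1.symm⟩)]

lemma Tmat_comm_kron {n : ℕ} (A : Matrix (Fin n) (Fin n) ℂ) :
    Tmat n * (A ⊗ₖ A) = (A ⊗ₖ A) * Tmat n := by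
  rw [Tmat_mul, mul_Tmat]
  ext p q
  simp [Matrix.kroneckerMap_apply, mul_comm]

noncomputable def eF (t : ℝ) : ℂ := Complex.exp (Real.pi * Complex.I * t)

lemma eF_star_mul (t : ℝ) : (starRingEnd ℂ) (eF t) * eF t = 1 := by
  rw [eF, ← Complex.exp_conj, ← Complex.exp_add]
  have : (starRingEnd ℂ) (↑Real.pi * Complex.I * ↑t) = -(↑Real.pi * Complex.I * ↑t) := by
    simp only [_root_.map_mul, Complex.conj_I, Complex.conj_ofReal]; ring
  rw [this, neg_add_cancel, Complex.exp_zero]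

noncomputable def chiF (n : ℕ) (t : ℝ) : Mn2 n :=
  ((1 - eF t) / 2) • (1 : Mn2 n) + ((1 + eF t) / 2) • Tmat n

lemma chiF_mul_star {n : ℕ} (t : ℝ) : chiF n t * star (chiF n t) = 1 := by
  have he := eF_star_mul t
  obtain ⟨a, ha⟩ : ∃ a : ℂ, a = (1 - eF t) / 2 := ⟨_, rfl⟩
  obtain ⟨b, hb⟩ : ∃ b : ℂ, b = (1 + eF t) / 2 := ⟨_, rfl⟩
  have hchi : chiF n t = a • (1 : Mn2 n) + b • Tmat n := by rw [chiF, ha, hb]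
  have hstar : star (chiF n t) =
      (starRingEnd ℂ) a • (1 : Mn2 n) + (starRingEnd ℂ) b • Tmat n := by
    rw [hchi, star_add, star_smul, star_smul, star_one, star_Tmat]
    rfl
  rw [hstar, hchi]
  rw [Matrix.add_mul, Matrix.mul_add, Matrix.mul_add, Matrix.smul_mul, Matrix.smul_mul,
    Matrix.smul_mul, Matrix.smul_mul, Matrix.mul_smul, Matrix.mul_smul, Matrix.mul_smul,
    Matrix.mul_smul, Matrix.one_mul, Matrix.mul_one, Tmat_sq, Matrix.one_mul]
  rw [smul_smul, smul_smul, smul_smul, smul_smul]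
  have h1 : a * (starRingEnd ℂ) a + b * (starRingEnd ℂ) b = 1 := by
    simp only [ha, hb, map_div₀, map_sub, map_add, _root_.map_one, map_ofNat]
    field_simp
    linear_combination 2 * he
  have h2 : a * (starRingEnd ℂ) b + b * (starRingEnd ℂ) a = 0 := by
    simp only [ha, hb, map_div₀, map_sub, map_add, _root_.map_one, map_ofNat]
    field_simp
    linear_combination -2 * he
  calc (a * (starRingEnd ℂ) a) • (1 : Mn2 n) + (a * (starRingEnd ℂ) b) • Tmat n +
        ((b * (starRingEnd ℂ) a) • Tmat n + (b * (starRingEnd ℂ) b) • (1 : Mn2 n))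
      = (a * (starRingEnd ℂ) a + b * (starRingEnd ℂ) b) • (1 : Mn2 n) +
        (a * (starRingEnd ℂ) b + b * (starRingEnd ℂ) a) • Tmat n := by
        rw [add_smul, add_smul]; abel
    _ = 1 := by rw [h1, h2, one_smul, zero_smul, add_zero]

/-- there is a continuous path `χ : [0,1] → U(n²)` with `χ(0) = T`,
`χ(1) = I`, `conj (χ t) = (χ t)⁻¹` for all `t`, and `χ(t)` commuting with `A ⊗ A`
for every `n × n` complex matrix `A` and all `t ∈ [0,1]`. -/
theorem stmt11 (n : ℕ) (hn : 1 ≤ n) :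
    ∃ χ : ℝ → Mn2 n,
      ContinuousOn χ (Set.Icc 0 1) ∧
      (∀ t ∈ Set.Icc (0 : ℝ) 1, χ t ∈ Matrix.unitaryGroup (Fin n × Fin n) ℂ) ∧
      χ 0 = Tmat n ∧
      χ 1 = 1 ∧
      (∀ t ∈ Set.Icc (0 : ℝ) 1, conjM (χ t) = (χ t)⁻¹) ∧
      (∀ t ∈ Set.Icc (0 : ℝ) 1, ∀ A : Matrix (Fin n) (Fin n) ℂ,
        χ t * (A ⊗ₖ A) = (A ⊗ₖ A) * χ t) := by
  refine ⟨chiF n, ?_, ?_, ?_, ?_, ?_, ?_⟩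
  · -- continuity
    have hcont : Continuous (eF) := by
      apply Complex.continuous_exp.comp
      exact (continuous_const.mul Complex.continuous_ofReal)
    have : Continuous (chiF n) := by
      apply Continuous.add
      · exact (((continuous_const.sub hcont).div_const 2).smul continuous_const)
      · exact (((continuous_const.add hcont).div_const 2).smul continuous_const)
    exact this.continuousOn
  · intro t _
    rw [Matrix.mem_unitaryGroup_iff]
    exact chiF_mul_star t
  · -- χ 0 = T
    have : eF 0 = 1 := by simp [eF]
    simp [chiF, this]
  · -- χ 1 = 1
    have : eF 1 = -1 := by
      rw [eF]
      push_cast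
      rw [mul_one, Complex.exp_pi_mul_I]
    rw [chiF, this]
    norm_num
  · -- conj = inv
    intro t _
    have hsymm : (chiF n t)ᵀ = chiF n t := by
      rw [chiF, Matrix.transpose_add, Matrix.transpose_smul, Matrix.transpose_smul,
        Matrix.transpose_one, transpose_Tmat]
    have hconj : conjM (chiF n t) = star (chiF n t) := by
      ext p q
      rw [conjM, Matrix.map_apply, Matrix.star_apply]
      have hq : chiF n t q p = chiF n t p q := by
        rw [← Matrix.transpose_apply (chiF n t) p q, hsymm]
      rw [hq]
      rfl
    rw [hconj, Matrix.inv_eq_right_inv (chiF_mul_star t)]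
  · -- commutation
    intro t _ A
    rw [chiF, Matrix.add_mul, Matrix.mul_add, Matrix.smul_mul, Matrix.smul_mul,
      Matrix.mul_smul, Matrix.mul_smul, Matrix.one_mul, Matrix.mul_one, Tmat_comm_kron]
end

section
/- Let n ≥ 1. For θ ∈ ℝ let a_θ = diag(e^{√−1 θ}, 1, …, 1) ∈ U(n) and let F_θ = {v ∈ ℂ^{n²} : (a_θ ⊗ a_θ)·conj(v) = v}, an ℝ-linear subspace of ℂ^{n²} (equivalently, indexing v by pairs (i,j), the condition is e^{√−1 θ(δ_{i1}+δ_{j1})} conj(v_{ij}) = v_{ij} for all i, j). Then: (i) dim_ℝ F_θ = n² for every θ; (ii) there exist continuous maps s₁, …, s_{n²} : ℝ → ℂ^{n²}, each 2π-periodic, such that for every θ ∈ ℝ the vectors s₁(θ), …, s_{n²}(θ) form an ℝ-basis of F_θ. (This says that the rank-n² real vector bundle over the circle with fibers F_θ is trivial; in particular it is orientable.) -/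
open Kronecker Matrix

/-- The diagonal unitary matrix `a_θ = diag(e^{√-1 θ}, 1, …, 1)`. -/
noncomputable def aTheta (n : ℕ) (θ : ℝ) : Matrix (Fin n) (Fin n) ℂ :=
  Matrix.diagonal (fun i => if (i : ℕ) = 0 then Complex.exp (θ * Complex.I) else 1)

/-- The ℝ-linear subspace `F_θ = {v ∈ ℂ^{n²} : (a_θ ⊗ a_θ)·conj(v) = v}`. -/
noncomputable def Fsub (n : ℕ) (θ : ℝ) : Submodule ℝ ((Fin n × Fin n) → ℂ) where
  carrier := {v | (aTheta n θ ⊗ₖ aTheta n θ).mulVec (fun p => starRingEnd ℂ (v p)) = v}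
  add_mem' := by
    intro a b ha hb
    simp only [Set.mem_setOf_eq] at ha hb ⊢
    have h : (fun p => starRingEnd ℂ ((a + b) p))
        = (fun p => starRingEnd ℂ (a p)) + (fun p => starRingEnd ℂ (b p)) := by
      funext p; simp
    rw [h, Matrix.mulVec_add, ha, hb]
  zero_mem' := by
    simp only [Set.mem_setOf_eq]
    have h : (fun p => starRingEnd ℂ ((0 : (Fin n × Fin n) → ℂ) p))
        = (0 : (Fin n × Fin n) → ℂ) := by funext p; simp
    rw [h, Matrix.mulVec_zero]
  smul_mem' := by
    intro r v hv
    simp only [Set.mem_setOf_eq] at hv ⊢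
    have h : (fun p => starRingEnd ℂ ((r • v) p))
        = r • (fun p => starRingEnd ℂ (v p)) := by
      funext p
      simp [Pi.smul_apply, Complex.real_smul, _root_.map_mul, Complex.conj_ofReal]
    rw [h, Matrix.mulVec_smul, hv]

/-!
`F_θ` is the fixed set of the antilinear map `v ↦ A conj v`, `A = a_θ ⊗ a_θ`. A ℂ-linear automorphism
`T` with `A conj (T v) = T (conj v)` carries the real vectors `ℝ^{n²}` onto `F_θ`, so the images of the
standard basis under `T` form an ℝ-basis of `F_θ`. With `z = e^{iθ}`, take `T` to be multiplication by
`z` at `(0,0)`, the identity at `(i,j)` with `i, j ≠ 0`, and on each pair of coordinates `(0,j), (j,0)`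
the matrix `[[1+z, i(1-z)], [-i(1-z), 1+z]] / 2 = e^{iθ/2} R(θ/2)`, with `R` a rotation. This frame
depends on `θ` only through `z`, hence is `2π`-periodic, although each line `e^{iθ/2} ℝ` of such a pair
is a Möbius band on its own.
-/

open Complex Submodule

section TwistedReal

variable {ι : Type*} [Fintype ι] [DecidableEq ι]

theorem LinearEquiv.linearIndependent_real_apply_single (T : (ι → ℂ) ≃ₗ[ℂ] (ι → ℂ)) :
    LinearIndependent ℝ fun p => T (Pi.single p 1) := by
  convert ((Pi.basisFun ℂ ι).map T).linearIndependent.restrict_scalars' ℝ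
  simp

theorem LinearEquiv.mem_span_real_apply_single_iff (T : (ι → ℂ) ≃ₗ[ℂ] (ι → ℂ)) {v : ι → ℂ} :
    v ∈ span ℝ (Set.range fun p => T (Pi.single p 1)) ↔ ∃ c : ι → ℝ, T (fun p => c p) = v := by
  rw [mem_span_range_iff_exists_fun]
  refine exists_congr fun c => Eq.congr_left ?_
  rw [← Finset.univ_sum_single fun p => (c p : ℂ), map_sum]
  refine Finset.sum_congr rfl fun p _ => ?_
  rw [← Complex.coe_smul, ← map_smul, ← Pi.single_smul', smul_eq_mul, mul_one]

theorem LinearEquiv.mem_span_real_apply_single_iff_mulVec_star (A : Matrix ι ι ℂ)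
    (T : (ι → ℂ) ≃ₗ[ℂ] (ι → ℂ)) (hT : ∀ v, A *ᵥ star (T v) = T (star v)) {v : ι → ℂ} :
    v ∈ span ℝ (Set.range fun p => T (Pi.single p 1)) ↔ A *ᵥ star v = v := by
  rw [T.mem_span_real_apply_single_iff]
  constructor
  · rintro ⟨c, rfl⟩
    rw [hT]
    congr 1
    ext p
    simp
  · intro hv
    have hreal : star (T.symm v) = T.symm v :=
      T.injective (by rw [← hT, T.apply_symm_apply, hv])
    refine ⟨fun p => (T.symm v p).re, ?_⟩
    conv_rhs => rw [← T.apply_symm_apply v]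
    congr 1
    ext p
    exact conj_eq_iff_re.mp (congrFun hreal p)

end TwistedReal

section CircleFrame

variable {n : ℕ}

noncomputable def circleFrame (z : ℂ) : (Fin n × Fin n → ℂ) →ₗ[ℂ] (Fin n × Fin n → ℂ) where
  toFun v q :=
    if (q.1 : ℕ) = 0 then
      if (q.2 : ℕ) = 0 then z * v q else (1 + z) / 2 * v q + I * (1 - z) / 2 * v q.swap
    else
      if (q.2 : ℕ) = 0 then (1 + z) / 2 * v q - I * (1 - z) / 2 * v q.swap else v q
  map_add' u w := by
    ext q
    simp only [Pi.add_apply]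
    split_ifs <;> ring
  map_smul' c w := by
    ext q
    simp only [Pi.smul_apply, smul_eq_mul, RingHom.id_apply]
    split_ifs <;> ring

theorem circleFrame_inv_apply_circleFrame {z : ℂ} (hz : z ≠ 0) (v : Fin n × Fin n → ℂ) :
    circleFrame (n := n) z⁻¹ (circleFrame z v) = v := by
  ext ⟨i, j⟩
  simp only [circleFrame, LinearMap.coe_mk, AddHom.coe_mk, Prod.swap_prod_mk]
  by_cases hi : (i : ℕ) = 0 <;> by_cases hj : (j : ℕ) = 0 <;> simp only [hi, hj, if_true, if_false]
  all_goals field_simp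
  all_goals linear_combination (z - 1) ^ 2 * v (i, j) * I_sq

theorem aTheta_kronecker_mulVec_star_circleFrame (θ : ℝ) (v : Fin n × Fin n → ℂ) :
    (aTheta n θ ⊗ₖ aTheta n θ) *ᵥ star (circleFrame (exp (θ * I)) v)
      = circleFrame (exp (θ * I)) (star v) := by
  rw [aTheta, diagonal_kronecker_diagonal]
  set z := exp (θ * I)
  have hz0 : z ≠ 0 := exp_ne_zero _
  have hz : star z = z⁻¹ := by
    rw [← exp_neg, ← starRingEnd_apply, ← exp_conj]
    simp
  ext ⟨i, j⟩
  simp only [circleFrame, LinearMap.coe_mk, AddHom.coe_mk, Prod.swap_prod_mk, mulVec_diagonal,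
    Pi.star_apply]
  by_cases hi : (i : ℕ) = 0 <;> by_cases hj : (j : ℕ) = 0 <;>
    simp only [hi, hj, if_true, if_false, star_add, star_sub, star_mul', star_div₀, hz, star_one,
      star_ofNat, Complex.star_def, conj_I]
  all_goals field_simp
  all_goals ring

theorem continuous_circleFrame_apply (v : Fin n × Fin n → ℂ) :
    Continuous fun z => circleFrame z v := by
  refine continuous_pi fun q => ?_
  simp only [circleFrame, LinearMap.coe_mk, AddHom.coe_mk]
  split_ifs <;> fun_prop

noncomputable def circleFrameEquiv {z : ℂ} (hz : z ≠ 0) :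
    (Fin n × Fin n → ℂ) ≃ₗ[ℂ] (Fin n × Fin n → ℂ) :=
  .ofLinearMap (circleFrame z) (circleFrame z⁻¹)
    (LinearMap.ext fun v => by simpa using circleFrame_inv_apply_circleFrame (inv_ne_zero hz) v)
    (LinearMap.ext (circleFrame_inv_apply_circleFrame hz))

end CircleFrame

theorem stmt12_general (n : ℕ) :
    (∀ θ : ℝ, Module.finrank ℝ (Fsub n θ) = n ^ 2) ∧
    ∃ s : Fin (n ^ 2) → ℝ → ((Fin n × Fin n) → ℂ),
      (∀ i, Continuous (s i)) ∧
      (∀ i θ, s i (θ + 2 * Real.pi) = s i θ) ∧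
      (∀ θ : ℝ, LinearIndependent ℝ (fun i => s i θ) ∧
        Submodule.span ℝ (Set.range (fun i => s i θ)) = Fsub n θ) := by
  let e : Fin (n ^ 2) ≃ Fin n × Fin n := (finCongr (sq n)).trans finProdFinEquiv.symm
  let T (θ : ℝ) : (Fin n × Fin n → ℂ) ≃ₗ[ℂ] (Fin n × Fin n → ℂ) :=
    circleFrameEquiv (exp_ne_zero (θ * I))
  let s (i : Fin (n ^ 2)) (θ : ℝ) := T θ (Pi.single (e i) 1)
  have hbasis (θ : ℝ) :
      LinearIndependent ℝ (fun i => s i θ) ∧ span ℝ (Set.range fun i => s i θ) = Fsub n θ := by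
    refine ⟨(T θ).linearIndependent_real_apply_single.comp e e.injective, SetLike.ext fun v => ?_⟩
    change v ∈ span ℝ (Set.range ((fun p => T θ (Pi.single p 1)) ∘ e)) ↔ _
    rw [EquivLike.range_comp]
    exact (T θ).mem_span_real_apply_single_iff_mulVec_star _
      (aTheta_kronecker_mulVec_star_circleFrame θ)
  refine ⟨fun θ => ?_, s, fun i => ?_, fun i θ => ?_, hbasis⟩
  · rw [← (hbasis θ).2, finrank_span_eq_card (hbasis θ).1, Fintype.card_fin]
  · exact (continuous_circleFrame_apply _).comp (by fun_prop)
  · have hper : exp (((θ + 2 * Real.pi : ℝ) : ℂ) * I) = exp (θ * I) := by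
      push_cast
      rw [add_mul, exp_add, exp_two_pi_mul_I, mul_one]
    simp only [s, T, circleFrameEquiv, LinearEquiv.coe_ofLinearMap, hper]

/-- (i) `dim_ℝ F_θ = n²` for every `θ`; (ii) there are continuous,
`2π`-periodic maps `s₁, …, s_{n²} : ℝ → ℂ^{n²}` such that for every `θ` the vectors
`s₁(θ), …, s_{n²}(θ)` form an ℝ-basis of `F_θ` (so the rank-`n²` real vector bundle
over the circle with fibers `F_θ` is trivial, in particular orientable). -/
theorem stmt12 (n : ℕ) (hn : 1 ≤ n) :
    (∀ θ : ℝ, Module.finrank ℝ (Fsub n θ) = n ^ 2) ∧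
    ∃ s : Fin (n ^ 2) → ℝ → ((Fin n × Fin n) → ℂ),
      (∀ i, Continuous (s i)) ∧
      (∀ i θ, s i (θ + 2 * Real.pi) = s i θ) ∧
      (∀ θ : ℝ, LinearIndependent ℝ (fun i => s i θ) ∧
        Submodule.span ℝ (Set.range (fun i => s i θ)) = Fsub n θ) :=
  stmt12_general n
end
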